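/- Let η be an antiunitary involution on a 2d-dimensional complex Hilbert space and Q, Q', Q'' be η-flipped projections. Define s(Q,Q') = det M where M_{αβ} = ⟨φ_α, φ'_β⟩ is built from bases extended via η as above. Then s(Q,Q') is independent of the choice of orthonormal bases of ran Q and ran Q', and satisfies the chain rule s(Q,Q')·s(Q',Q'') = s(Q,Q''). -/
import Mathlib


open scoped InnerProductSpace

/-- The determinant of the Gram-type matrix `M_{αβ} = ⟪φ_α, φ'_β⟫` built from
orthonormal bases of `ran Q` and `ran Q'` extended via `η`. -/
noncomputable def gramDet {H : Type*} [NormedAddCommGroup H] [InnerProductSpace ℂ H]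
    (η : H → H) {d : ℕ} (φ φ' : Fin d → H) : ℂ :=
  Matrix.det (Matrix.of fun i j : Fin d ⊕ Fin d =>
    ⟪Sum.elim φ (fun a => η (φ a)) i, Sum.elim φ' (fun a => η (φ' a)) j⟫_ℂ)

/-- `φ` is an orthonormal basis of the range of the projection `Q`. -/
def IsONBasisOfRange {H : Type*} [NormedAddCommGroup H] [InnerProductSpace ℂ H]
    (Q : H →ₗ[ℂ] H) {d : ℕ} (φ : Fin d → H) : Prop :=
  Orthonormal ℂ φ ∧ (∀ a, Q (φ a) = φ a) ∧ ∀ x, Q x ∈ Submodule.span ℂ (Set.range φ)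

section Aux

variable {H : Type*} [NormedAddCommGroup H] [InnerProductSpace ℂ H]
variable {d : ℕ} {η : H → H}

private lemma eta_zero (hadd : ∀ x y : H, η (x + y) = η x + η y) : η 0 = 0 := by
  have h : η 0 + η 0 = η 0 + 0 := by
    rw [add_zero]; simpa using (hadd 0 0).symm
  exact add_left_cancel h

private lemma Q_eta_eq_zero (hadd : ∀ x y : H, η (x + y) = η x + η y)
    (hinv : ∀ x, η (η x) = x) {Q : H →ₗ[ℂ] H}
    (hQflip : ∀ x, η (Q (η x)) + Q x = x) {x : H} (hx : Q x = x) :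
    Q (η x) = 0 := by
  have h := hQflip x
  rw [hx] at h
  have h2 : η (Q (η x)) = 0 := by
    have := add_eq_right.mp h
    exact this
  calc Q (η x) = η (η (Q (η x))) := (hinv _).symm
    _ = η 0 := by rw [h2]
    _ = 0 := eta_zero hadd

private lemma inner_fix_eta (hadd : ∀ x y : H, η (x + y) = η x + η y)
    (hinv : ∀ x, η (η x) = x) {Q : H →ₗ[ℂ] H}
    (hQsa : ∀ x y, ⟪Q x, y⟫_ℂ = ⟪x, Q y⟫_ℂ)
    (hQflip : ∀ x, η (Q (η x)) + Q x = x) {x y : H}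
    (hx : Q x = x) (hy : Q y = y) : ⟪x, η y⟫_ℂ = 0 := by
  calc ⟪x, η y⟫_ℂ = ⟪Q x, η y⟫_ℂ := by rw [hx]
    _ = ⟪x, Q (η y)⟫_ℂ := hQsa _ _
    _ = ⟪x, (0 : H)⟫_ℂ := by rw [Q_eta_eq_zero hadd hinv hQflip hy]
    _ = 0 := inner_zero_right _

private lemma ext_orthonormal (hadd : ∀ x y : H, η (x + y) = η x + η y)
    (hinner : ∀ x y, ⟪η x, η y⟫_ℂ = ⟪y, x⟫_ℂ)
    (hinv : ∀ x, η (η x) = x) {Q : H →ₗ[ℂ] H}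
    (hQsa : ∀ x y, ⟪Q x, y⟫_ℂ = ⟪x, Q y⟫_ℂ)
    (hQflip : ∀ x, η (Q (η x)) + Q x = x) {φ : Fin d → H}
    (hφ : IsONBasisOfRange Q φ) :
    Orthonormal ℂ (Sum.elim φ (fun a => η (φ a))) := by
  obtain ⟨hon, hfix, -⟩ := hφ
  have hcross : ∀ a b, ⟪φ a, η (φ b)⟫_ℂ = 0 := fun a b =>
    inner_fix_eta hadd hinv hQsa hQflip (hfix a) (hfix b)
  rw [orthonormal_iff_ite]
  rintro (a | a) (b | b)
  · simpa using orthonormal_iff_ite.mp hon a b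
  · simpa using hcross a b
  · have : ⟪η (φ a), φ b⟫_ℂ = (starRingEnd ℂ) ⟪φ b, η (φ a)⟫_ℂ :=
      (inner_conj_symm _ _).symm
    simp [this, hcross b a]
  · have h := orthonormal_iff_ite.mp hon b a
    simp only [Sum.elim_inr, hinner, h, Sum.inr.injEq]
    simp [eq_comm]

private lemma ext_onb [FiniteDimensional ℂ H] (hd : Module.finrank ℂ H = 2 * d)
    (hadd : ∀ x y : H, η (x + y) = η x + η y)
    (hinner : ∀ x y, ⟪η x, η y⟫_ℂ = ⟪y, x⟫_ℂ)
    (hinv : ∀ x, η (η x) = x) {Q : H →ₗ[ℂ] H}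
    (hQsa : ∀ x y, ⟪Q x, y⟫_ℂ = ⟪x, Q y⟫_ℂ)
    (hQflip : ∀ x, η (Q (η x)) + Q x = x) {φ : Fin d → H}
    (hφ : IsONBasisOfRange Q φ) :
    ∃ b : OrthonormalBasis (Fin d ⊕ Fin d) ℂ H,
      ∀ i, b i = Sum.elim φ (fun a => η (φ a)) i := by
  have hon := ext_orthonormal hadd hinner hinv hQsa hQflip hφ
  have hli := hon.linearIndependent
  have hspan : Submodule.span ℂ (Set.range (Sum.elim φ (fun a => η (φ a)))) = ⊤ := by
    apply Submodule.eq_top_of_finrank_eq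
    rw [finrank_span_eq_card hli]
    simp [hd, two_mul]
  refine ⟨OrthonormalBasis.mk hon hspan.ge, fun i => ?_⟩
  simp

private lemma gram_chain (φ φ' φ'' : Fin d → H)
    (b' : OrthonormalBasis (Fin d ⊕ Fin d) ℂ H)
    (hb' : ∀ i, b' i = Sum.elim φ' (fun a => η (φ' a)) i) :
    gramDet η φ φ' * gramDet η φ' φ'' = gramDet η φ φ'' := by
  unfold gramDet
  rw [← Matrix.det_mul]
  congr 1
  ext i k
  simp only [Matrix.mul_apply, Matrix.of_apply]
  simp only [← hb']
  exact b'.sum_inner_mul_inner _ _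

private lemma gram_self (φ : Fin d → H)
    (hon : Orthonormal ℂ (Sum.elim φ (fun a => η (φ a)))) :
    gramDet η φ φ = 1 := by
  unfold gramDet
  have : (Matrix.of fun i j : Fin d ⊕ Fin d =>
      ⟪Sum.elim φ (fun a => η (φ a)) i, Sum.elim φ (fun a => η (φ a)) j⟫_ℂ)
      = (1 : Matrix (Fin d ⊕ Fin d) (Fin d ⊕ Fin d) ℂ) := by
    ext i j
    rw [Matrix.of_apply, orthonormal_iff_ite.mp hon i j, Matrix.one_apply]
  rw [this, Matrix.det_one]

/-- For two orthonormal bases of the range of the same η-flipped projection,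
the gram determinant is 1. -/
private lemma gram_same (hadd : ∀ x y : H, η (x + y) = η x + η y)
    (hinner : ∀ x y, ⟪η x, η y⟫_ℂ = ⟪y, x⟫_ℂ)
    (hinv : ∀ x, η (η x) = x) {Q : H →ₗ[ℂ] H}
    (hQsa : ∀ x y, ⟪Q x, y⟫_ℂ = ⟪x, Q y⟫_ℂ)
    (hQflip : ∀ x, η (Q (η x)) + Q x = x) {φ ψ : Fin d → H}
    (hφ : IsONBasisOfRange Q φ) (hψ : IsONBasisOfRange Q ψ)
    (b2 : OrthonormalBasis (Fin d ⊕ Fin d) ℂ H)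
    (hb2 : ∀ i, b2 i = Sum.elim ψ (fun a => η (ψ a)) i) :
    gramDet η φ ψ = 1 := by
  set A : Matrix (Fin d) (Fin d) ℂ := Matrix.of fun b a => ⟪φ b, ψ a⟫_ℂ with hA
  have hblocks : (Matrix.of fun i j : Fin d ⊕ Fin d =>
      ⟪Sum.elim φ (fun a => η (φ a)) i, Sum.elim ψ (fun a => η (ψ a)) j⟫_ℂ)
      = Matrix.fromBlocks A 0 0 (A.map (starRingEnd ℂ)) := by
    ext i j
    rcases i with b | b <;> rcases j with a | a
    · simp [hA]
    · simp only [Matrix.of_apply, Sum.elim_inl, Sum.elim_inr,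
        Matrix.fromBlocks_apply₁₂, Matrix.zero_apply]
      exact inner_fix_eta hadd hinv hQsa hQflip (hφ.2.1 b) (hψ.2.1 a)
    · simp only [Matrix.of_apply, Sum.elim_inl, Sum.elim_inr,
        Matrix.fromBlocks_apply₂₁, Matrix.zero_apply]
      rw [← inner_conj_symm]
      rw [inner_fix_eta hadd hinv hQsa hQflip (hψ.2.1 a) (hφ.2.1 b)]
      simp
    · simp only [Matrix.of_apply, Sum.elim_inr, Matrix.fromBlocks_apply₂₂,
        Matrix.map_apply, hA, Matrix.of_apply]
      rw [hinner, ← inner_conj_symm]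
  have hunit : A * A.conjTranspose = 1 := by
    ext b b'
    simp only [Matrix.mul_apply, Matrix.conjTranspose_apply, hA, Matrix.of_apply]
    have key := b2.sum_inner_mul_inner (φ b) (φ b')
    rw [Fintype.sum_sum_type] at key
    have hzero : ∀ a, ⟪φ b, b2 (Sum.inr a)⟫_ℂ * ⟪b2 (Sum.inr a), φ b'⟫_ℂ = 0 := by
      intro a
      rw [hb2]
      simp only [Sum.elim_inr]
      rw [inner_fix_eta hadd hinv hQsa hQflip (hφ.2.1 b) (hψ.2.1 a)]
      ring
    rw [Finset.sum_congr rfl (fun a _ => hzero a), Finset.sum_const,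
      smul_zero, add_zero] at key
    have hsum : ∀ a, ⟪φ b, b2 (Sum.inl a)⟫_ℂ * ⟪b2 (Sum.inl a), φ b'⟫_ℂ
        = ⟪φ b, ψ a⟫_ℂ * (starRingEnd ℂ) ⟪φ b', ψ a⟫_ℂ := by
      intro a
      rw [hb2]
      simp only [Sum.elim_inl]
      rw [← inner_conj_symm (φ b') (ψ a)]
      rw [inner_conj_symm]
      rw [← inner_conj_symm (ψ a) (φ b')]
    rw [Finset.sum_congr rfl (fun a _ => hsum a)] at key
    show ∑ a : Fin d, ⟪φ b, ψ a⟫_ℂ * (starRingEnd ℂ) ⟪φ b', ψ a⟫_ℂ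
      = (1 : Matrix (Fin d) (Fin d) ℂ) b b'
    rw [key, orthonormal_iff_ite.mp hφ.1 b b', Matrix.one_apply]
  have hdet : A.det * (starRingEnd ℂ) A.det = 1 := by
    have := congrArg Matrix.det hunit
    rwa [Matrix.det_mul, Matrix.det_conjTranspose, Matrix.det_one] at this
  unfold gramDet
  rw [hblocks, Matrix.det_fromBlocks_zero₂₁, ← RingHom.mapMatrix_apply,
    ← RingHom.map_det]
  exact hdet

end Aux

/-- The relative sign `s(Q,Q') = det M` of two η-flipped projections is
independent of the choice of orthonormal bases of `ran Q` and `ran Q'`, and it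
satisfies the chain rule `s(Q,Q')·s(Q',Q'') = s(Q,Q'')`. -/
theorem gramDet_basis_independent_and_chain_rule
    {H : Type*} [NormedAddCommGroup H] [InnerProductSpace ℂ H] [FiniteDimensional ℂ H]
    (d : ℕ) (hd : Module.finrank ℂ H = 2 * d)
    (η : H → H)
    (hadd : ∀ x y, η (x + y) = η x + η y)
    (hsmul : ∀ (c : ℂ) (x : H), η (c • x) = (starRingEnd ℂ c) • η x)
    (hinner : ∀ x y, ⟪η x, η y⟫_ℂ = ⟪y, x⟫_ℂ)
    (hinv : ∀ x, η (η x) = x)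
    (Q Q' Q'' : H →ₗ[ℂ] H)
    (hQproj : Q ∘ₗ Q = Q) (hQsa : ∀ x y, ⟪Q x, y⟫_ℂ = ⟪x, Q y⟫_ℂ)
    (hQflip : ∀ x, η (Q (η x)) + Q x = x)
    (hQ'proj : Q' ∘ₗ Q' = Q') (hQ'sa : ∀ x y, ⟪Q' x, y⟫_ℂ = ⟪x, Q' y⟫_ℂ)
    (hQ'flip : ∀ x, η (Q' (η x)) + Q' x = x)
    (hQ''proj : Q'' ∘ₗ Q'' = Q'') (hQ''sa : ∀ x y, ⟪Q'' x, y⟫_ℂ = ⟪x, Q'' y⟫_ℂ)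
    (hQ''flip : ∀ x, η (Q'' (η x)) + Q'' x = x)
    (φ ψ φ' ψ' φ'' : Fin d → H)
    (hφ : IsONBasisOfRange Q φ) (hψ : IsONBasisOfRange Q ψ)
    (hφ' : IsONBasisOfRange Q' φ') (hψ' : IsONBasisOfRange Q' ψ')
    (hφ'' : IsONBasisOfRange Q'' φ'') :
    gramDet η φ φ' = gramDet η ψ ψ' ∧
      gramDet η φ φ' * gramDet η φ' φ'' = gramDet η φ φ'' := by
  obtain ⟨bφ, hbφ⟩ := ext_onb hd hadd hinner hinv hQsa hQflip hφ
  obtain ⟨bφ', hbφ'⟩ := ext_onb hd hadd hinner hinv hQ'sa hQ'flip hφ'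
  obtain ⟨bψ', hbψ'⟩ := ext_onb hd hadd hinner hinv hQ'sa hQ'flip hψ'
  constructor
  · have h1 : gramDet η ψ φ * gramDet η φ ψ' = gramDet η ψ ψ' :=
      gram_chain ψ φ ψ' bφ hbφ
    have h2 : gramDet η φ φ' * gramDet η φ' ψ' = gramDet η φ ψ' :=
      gram_chain φ φ' ψ' bφ' hbφ'
    have h3 : gramDet η ψ φ = 1 :=
      gram_same hadd hinner hinv hQsa hQflip hψ hφ bφ hbφ
    have h4 : gramDet η φ' ψ' = 1 :=
      gram_same hadd hinner hinv hQ'sa hQ'flip hφ' hψ' bψ' hbψ'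
    rw [h3, one_mul] at h1
    rw [h4, mul_one] at h2
    rw [← h1, ← h2]
  · exact gram_chain φ φ' φ'' bφ' hbφ'
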